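/- For n = 4, in the polynomial algebra ℂ[x_1,…,x_4, y_1,…,y_4] tensored with the exterior algebra Λ(e_1,…,e_4), the elements 𝖮_{ij} := 𝖫_{ij} + (1/2) e_i ∧ e_j with 𝖫_{ij} = x_i y_j - x_j y_i satisfy (𝖮_{12}𝖮_{34} - 𝖮_{13}𝖮_{24} + 𝖮_{14}𝖮_{23})² = 0. -/
import Mathlib
set_option maxHeartbeats 4000000

noncomputable def OsymGr {A : Type} [Ring A] [Algebra ℂ A]
    (x y e : Fin 4 → A) (i j : Fin 4) : A :=
  (x i * y j - x j * y i) + ((1 : ℂ) / 2) • (e i * e j)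

/-- For `n = 4`, in `ℂ[x₁,…,x₄,y₁,…,y₄] ⊗ Λ(e₁,…,e₄)` (modeled as a `ℂ`-algebra in which
the `xᵢ, yⱼ` are central and the `eᵢ` anticommute), the elements
`𝖮_{ij} = 𝖫_{ij} + (1/2) eᵢ ∧ eⱼ` satisfy
`(𝖮_{12}𝖮_{34} - 𝖮_{13}𝖮_{24} + 𝖮_{14}𝖮_{23})² = 0`. -/
theorem stmt18 {A : Type} [Ring A] [Algebra ℂ A] (x y e : Fin 4 → A)
    (hxx : ∀ i j, x i * x j = x j * x i)
    (hyy : ∀ i j, y i * y j = y j * y i)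
    (hxy : ∀ i j, x i * y j = y j * x i)
    (hxe : ∀ i j, x i * e j = e j * x i)
    (hye : ∀ i j, y i * e j = e j * y i)
    (hee : ∀ i j, e i * e j = -(e j * e i)) :
    (OsymGr x y e 0 1 * OsymGr x y e 2 3 - OsymGr x y e 0 2 * OsymGr x y e 1 3 +
        OsymGr x y e 0 3 * OsymGr x y e 1 2) ^ 2 = 0 := by
  have esq : ∀ i, e i * e i = 0 := by
    intro i
    have h2 : e i * e i + e i * e i = 0 := by
      nth_rewrite 1 [hee i i]; exact neg_add_cancel _
    have h3 : (2:ℂ) • (e i * e i) = 0 := by rw [two_smul]; exact h2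
    calc e i * e i = ((2:ℂ)⁻¹ * 2) • (e i * e i) := by norm_num
      _ = (2:ℂ)⁻¹ • ((2:ℂ) • (e i * e i)) := by rw [mul_smul]
      _ = 0 := by rw [h3, smul_zero]
  have esq' : ∀ i (a : A), e i * (e i * a) = 0 := fun i a => by
    rw [← mul_assoc, esq, zero_mul]
  have sw : ∀ i j (a : A), e i * (e j * a) = -(e j * (e i * a)) := fun i j a => by
    rw [← mul_assoc, hee, neg_mul, mul_assoc]
  have hyx : ∀ i j, y i * x j = x j * y i := fun i j => (hxy j i).symm
  have hyx' : ∀ i j (a : A), y i * (x j * a) = x j * (y i * a) := fun i j a => by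
    rw [← mul_assoc, hyx, mul_assoc]
  have hex : ∀ i j, e i * x j = x j * e i := fun i j => (hxe j i).symm
  have hex' : ∀ i j (a : A), e i * (x j * a) = x j * (e i * a) := fun i j a => by
    rw [← mul_assoc, hex, mul_assoc]
  have hey : ∀ i j, e i * y j = y j * e i := fun i j => (hye j i).symm
  have hey' : ∀ i j (a : A), e i * (y j * a) = y j * (e i * a) := fun i j a => by
    rw [← mul_assoc, hey, mul_assoc]
  have hxx' : ∀ i j (a : A), x i * (x j * a) = x j * (x i * a) := fun i j a => by
    rw [← mul_assoc, hxx, mul_assoc]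
  have hyy' : ∀ i j (a : A), y i * (y j * a) = y j * (y i * a) := fun i j a => by
    rw [← mul_assoc, hyy, mul_assoc]
  simp only [OsymGr, pow_two]
  simp only [mul_add, add_mul, mul_sub, sub_mul, smul_mul_assoc, mul_smul_comm,
    mul_assoc, mul_neg, neg_mul, neg_neg, smul_add, smul_sub, smul_neg,
    hxx 1 0, hxx 2 0, hxx 2 1, hxx 3 0, hxx 3 1, hxx 3 2,
    hxx' 1 0, hxx' 2 0, hxx' 2 1, hxx' 3 0, hxx' 3 1, hxx' 3 2,
    hyy 1 0, hyy 2 0, hyy 2 1, hyy 3 0, hyy 3 1, hyy 3 2,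
    hyy' 1 0, hyy' 2 0, hyy' 2 1, hyy' 3 0, hyy' 3 1, hyy' 3 2,
    hyx, hyx', hex, hex', hey, hey',
    hee 1 0, hee 2 0, hee 2 1, hee 3 0, hee 3 1, hee 3 2,
    sw 1 0, sw 2 0, sw 2 1, sw 3 0, sw 3 1, sw 3 2,
    esq, esq', mul_zero, zero_mul, smul_zero, add_zero, zero_add, sub_zero, zero_sub]
  module
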